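/- arXiv:1809.02376 — 4 statements merged into one kernel-verified Lean document; each statement's English description precedes it below -/
import Mathlib

section
/- If a metric space (M, d) embeds with distortion α into a k-dimensional normed space, then M is (4α+1)^k-doubling: every ball in M of radius r can be covered by at most (4α+1)^k balls of radius r/2. -/
/-!
If `t` is an `r/2`-separated subset of `B(x, r)`, the closed balls of radius `r/4` around the
points `f u`, `u ∈ t`, are pairwise disjoint and lie in `B(f x, α r + r/4)`; comparing their Haar
measures gives `#t ≤ (4α + 1)^k`. Hence a maximal `r/2`-separated subset of `B(x, r)` is finite,
of size at most `(4α + 1)^k`, and by maximality it is an `r/2`-cover of the ball.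
-/

open Metric MeasureTheory
open scoped NNReal ENNReal

section Volumetric

variable {E : Type*} [NormedAddCommGroup E] [NormedSpace ℝ E] [FiniteDimensional ℝ E]

theorem card_le_of_pairwise_lt_dist {ι : Type*} {s : Finset ι} {p : ι → E} {c : E} {ε R : ℝ}
    (hε : 0 < ε) (hR : 0 ≤ R) (hsep : (s : Set ι).Pairwise fun i j ↦ ε < dist (p i) (p j))
    (hs : ∀ i ∈ s, dist (p i) c ≤ R) :
    (s.card : ℝ) ≤ (2 * R / ε + 1) ^ Module.finrank ℝ E := by
  borelize E
  set μ : Measure E := Measure.addHaar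
  set k := Module.finrank ℝ E
  have hρ : 0 < ε / 2 := half_pos hε
  have hdisj : (s : Set ι).PairwiseDisjoint fun i ↦ closedBall (p i) (ε / 2) := fun i hi j hj hij ↦
    closedBall_disjoint_closedBall (by linarith [hsep hi hj hij])
  have hsub : ⋃ i ∈ s, closedBall (p i) (ε / 2) ⊆ closedBall c (R + ε / 2) :=
    Set.iUnion₂_subset fun i hi ↦ closedBall_subset_closedBall' (by linarith [hs i hi])
  have hμ : (s.card : ℝ≥0∞) * ENNReal.ofReal ((ε / 2) ^ k) ≤ ENNReal.ofReal ((R + ε / 2) ^ k) := by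
    have hV₀ : μ (closedBall 0 1) ≠ 0 := (measure_closedBall_pos μ 0 one_pos).ne'
    have hV : μ (closedBall 0 1) ≠ ⊤ := measure_closedBall_lt_top.ne
    rw [← ENNReal.mul_le_mul_iff_left hV₀ hV]
    calc (s.card : ℝ≥0∞) * ENNReal.ofReal ((ε / 2) ^ k) * μ (closedBall 0 1)
        = μ (⋃ i ∈ s, closedBall (p i) (ε / 2)) := by
          rw [measure_biUnion_finset hdisj fun i _ ↦ measurableSet_closedBall]
          simp [μ.addHaar_closedBall' _ hρ.le, mul_assoc, k]
      _ ≤ μ (closedBall c (R + ε / 2)) := measure_mono hsub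
      _ = ENNReal.ofReal ((R + ε / 2) ^ k) * μ (closedBall 0 1) :=
          μ.addHaar_closedBall' _ (by positivity)
  have hvol : (s.card : ℝ) * (ε / 2) ^ k ≤ (R + ε / 2) ^ k := by
    rw [← ENNReal.ofReal_natCast, ← ENNReal.ofReal_mul (by positivity)] at hμ
    exact (ENNReal.ofReal_le_ofReal_iff (by positivity)).1 hμ
  calc (s.card : ℝ) ≤ (R + ε / 2) ^ k / (ε / 2) ^ k := (le_div_iff₀ (by positivity)).2 hvol
    _ = (2 * R / ε + 1) ^ k := by rw [← div_pow]; congr 1; field_simp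

theorem Metric.IsSeparated.card_le_of_embedding {M : Type*} [PseudoMetricSpace M] {f : M → E}
    {α : ℝ} (hα : 0 ≤ α) (hlow : ∀ u v, dist u v ≤ dist (f u) (f v))
    (hup : ∀ u v, dist (f u) (f v) ≤ α * dist u v) {t : Finset M} {x : M} {r : ℝ} {ε : ℝ≥0}
    (hε : 0 < ε) (hr : 0 ≤ r) (ht : (t : Set M) ⊆ closedBall x r)
    (hsep : IsSeparated ε (t : Set M)) :
    (t.card : ℝ) ≤ (2 * (α * r) / ε + 1) ^ Module.finrank ℝ E := by
  refine card_le_of_pairwise_lt_dist (c := f x) hε (by positivity) (fun u hu v hv huv ↦ ?_)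
    fun u hu ↦ (hup u x).trans (mul_le_mul_of_nonneg_left (ht hu) hα)
  have huv' : (ε : ℝ≥0∞) < edist u v := hsep hu hv huv
  rw [edist_nndist, ENNReal.coe_lt_coe] at huv'
  exact (NNReal.coe_lt_coe.2 huv').trans_le (hlow u v)

end Volumetric

theorem Set.encard_le_floor_of_forall_finset_card_le {α : Type*} {s : Set α} {B : ℝ}
    (h : ∀ t : Finset α, (t : Set α) ⊆ s → (t.card : ℝ) ≤ B) : s.encard ≤ ⌊B⌋₊ := by
  by_contra! hlt
  obtain ⟨t, hts, htcard⟩ := Set.exists_subset_encard_eq (Order.add_one_le_of_lt hlt)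
  have htfin : t.Finite := Set.finite_of_encard_eq_coe htcard
  have hcard : htfin.toFinset.card = ⌊B⌋₊ + 1 := by
    rw [← ENat.natCast_inj, ← htfin.encard_eq_coe_toFinset_card, htcard]; rfl
  have hle := h htfin.toFinset (by simpa using hts)
  rw [hcard] at hle
  push_cast at hle
  linarith [Nat.lt_floor_add_one B]

theorem Metric.exists_finset_card_le_subset_iUnion_closedBall {X : Type*} [PseudoMetricSpace X]
    {ε : ℝ≥0} {A : Set X} {B : ℝ}
    (h : ∀ t : Finset X, (t : Set X) ⊆ A → IsSeparated ε (t : Set X) → (t.card : ℝ) ≤ B) :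
    ∃ s : Finset X, (s.card : ℝ) ≤ B ∧ A ⊆ ⋃ y ∈ s, closedBall y ε := by
  have hpack : packingNumber ε A ≤ ⌊B⌋₊ := iSup₂_le fun C hCA ↦ iSup_le fun hC ↦
    Set.encard_le_floor_of_forall_finset_card_le fun t htC ↦ h t (htC.trans hCA) (hC.subset htC)
  have hne : packingNumber ε A ≠ ⊤ := ne_top_of_le_ne_top (by simp) hpack
  have hfin : (maximalSeparatedSet ε A).Finite :=
    Set.finite_of_encard_le_coe ((encard_maximalSeparatedSet hne).trans_le hpack)
  refine ⟨hfin.toFinset, h _ (by simpa using maximalSeparatedSet_subset)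
    (by simpa using isSeparated_maximalSeparatedSet), ?_⟩
  simpa using (isCover_maximalSeparatedSet hne).subset_iUnion_closedBall

/-- If a metric space embeds with distortion α into a k-dimensional normed
space, then it is (4α+1)^k-doubling. -/
theorem doubling_of_embedding (M : Type*) [MetricSpace M] (k : ℕ)
    (X : Type*) [NormedAddCommGroup X] [NormedSpace ℝ X] [FiniteDimensional ℝ X]
    (hX : Module.finrank ℝ X = k) (α : ℝ) (hα : 1 ≤ α) (f : M → X)
    (hf : ∀ u v : M, dist u v ≤ ‖f u - f v‖ ∧ ‖f u - f v‖ ≤ α * dist u v) :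
    ∀ (x : M) (r : ℝ), 0 ≤ r →
      ∃ s : Finset M, (s.card : ℝ) ≤ (4 * α + 1) ^ k ∧
        Metric.closedBall x r ⊆ ⋃ y ∈ s, Metric.closedBall y (r / 2) := by
  intro x r hr
  have hα₀ : 0 ≤ α := zero_le_one.trans hα
  rcases hr.eq_or_lt with rfl | hr
  · exact ⟨{x}, by simpa using one_le_pow₀ (by linarith : (1 : ℝ) ≤ 4 * α + 1), by simp⟩
  have hlow u v : dist u v ≤ dist (f u) (f v) := dist_eq_norm (f u) (f v) ▸ (hf u v).1
  have hup u v : dist (f u) (f v) ≤ α * dist u v := dist_eq_norm (f u) (f v) ▸ (hf u v).2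
  have hε : 0 < (r / 2).toNNReal := Real.toNNReal_pos.2 (half_pos hr)
  have hε' : ((r / 2).toNNReal : ℝ) = r / 2 := Real.coe_toNNReal _ (half_pos hr).le
  obtain ⟨s, hcard, hcover⟩ := exists_finset_card_le_subset_iUnion_closedBall (A := closedBall x r)
    fun t ht hsep ↦ hsep.card_le_of_embedding hα₀ hlow hup hε hr.le ht
  refine ⟨s, hcard.trans_eq ?_, hε' ▸ hcover⟩
  rw [hX, hε']
  congr 1
  field_simp
  ring
end

section
/- Subadditivity of p-th roots of nonlinear Rayleigh quotients under matrix multiplication: with the notation above, for row-stochastic matrices A, B both reversible with respect to π and any x ∈ Mⁿ with not all coordinates equal, R(x; AB, d^p)^{1/p} ≤ R(x; A, d^p)^{1/p} + R(x; B, d^p)^{1/p}. Consequently, for every t ∈ ℕ, R(x; A^t, d^p) ≤ t^p R(x; A, d^p). -/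
open scoped BigOperators

/-- The nonlinear Rayleigh quotient R(x; A, d^p). -/
noncomputable def rayleighQuotient {n : ℕ} (π : Fin n → ℝ)
    (A : Matrix (Fin n) (Fin n) ℝ) {M : Type*} [MetricSpace M] (p : ℝ)
    (x : Fin n → M) : ℝ :=
  (∑ i, ∑ j, π i * A i j * dist (x i) (x j) ^ p) /
    (∑ i, ∑ j, π i * π j * dist (x i) (x j) ^ p)

/-!
Weight triples `(i, k, j)` by `π i * A i k * B k j`. The numerator for `A * B` is the weighted sum
of `d(x i, x j)^p`; summing out `j` (as `B` is stochastic) or `i` (as `π` is `A`-stationary, by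
reversibility) identifies the weighted sums of `d(x i, x k)^p` and `d(x k, x j)^p` with the
numerators for `A` and `B`. The triangle inequality through `x k` and Minkowski's inequality in
`L^p` of these weights then give subadditivity of the `p`-th roots, and induction the bound for
`A ^ t`; the common nonnegative denominator divides out.
-/

open Finset Matrix

theorem weighted_Lp_add_le_of_nonneg {α : Type*} (s : Finset α) {w f g : α → ℝ} {p : ℝ}
    (hp : 1 ≤ p) (hw : ∀ i ∈ s, 0 ≤ w i) (hf : ∀ i ∈ s, 0 ≤ f i) (hg : ∀ i ∈ s, 0 ≤ g i) :
    (∑ i ∈ s, w i * (f i + g i) ^ p) ^ (1 / p) ≤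
      (∑ i ∈ s, w i * f i ^ p) ^ (1 / p) + (∑ i ∈ s, w i * g i ^ p) ^ (1 / p) := by
  have hp0 : p ≠ 0 := (zero_lt_one.trans_le hp).ne'
  have hweight : ∀ i ∈ s, ∀ y : ℝ, 0 ≤ y → (w i ^ (1 / p) * y) ^ p = w i * y ^ p := by
    intro i hi y hy
    rw [Real.mul_rpow (Real.rpow_nonneg (hw i hi) _) hy, one_div,
      Real.rpow_inv_rpow (hw i hi) hp0]
  have := Real.Lp_add_le_of_nonneg (s := s) (f := fun i => w i ^ (1 / p) * f i)
    (g := fun i => w i ^ (1 / p) * g i) hp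
    (fun i hi => mul_nonneg (Real.rpow_nonneg (hw i hi) _) (hf i hi))
    (fun i hi => mul_nonneg (Real.rpow_nonneg (hw i hi) _) (hg i hi))
  simp only [← mul_add] at this
  rwa [sum_congr rfl fun i hi => hweight i hi _ (add_nonneg (hf i hi) (hg i hi)),
    sum_congr rfl fun i hi => hweight i hi _ (hf i hi),
    sum_congr rfl fun i hi => hweight i hi _ (hg i hi)] at this

theorem vecMul_eq_self_of_reversible {ι R : Type*} [Fintype ι] [CommSemiring R] {π : ι → R}
    {A : Matrix ι ι R} (hA : ∀ i, ∑ j, A i j = 1) (hrev : ∀ i j, π i * A i j = π j * A j i) :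
    π ᵥ* A = π := by
  ext k
  simp only [vecMul, dotProduct, hrev _ k, ← mul_sum, hA, mul_one]

section rayleighNumerator

variable {ι : Type*} [Fintype ι] {M : Type*} [PseudoMetricSpace M]
  {π : ι → ℝ} {A B : Matrix ι ι ℝ} {p : ℝ}

noncomputable def rayleighNumerator (π : ι → ℝ) (A : Matrix ι ι ℝ) (p : ℝ) (x : ι → M) : ℝ :=
  ∑ i, ∑ j, π i * A i j * dist (x i) (x j) ^ p

theorem rayleighNumerator_nonneg (hπ : ∀ i, 0 ≤ π i) (hA : ∀ i j, 0 ≤ A i j) (x : ι → M) :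
    0 ≤ rayleighNumerator π A p x :=
  sum_nonneg fun i _ => sum_nonneg fun j _ =>
    mul_nonneg (mul_nonneg (hπ i) (hA i j)) (Real.rpow_nonneg dist_nonneg p)

theorem rayleighNumerator_one [DecidableEq ι] (hp : p ≠ 0) (x : ι → M) :
    rayleighNumerator π 1 p x = 0 :=
  sum_eq_zero fun i _ => sum_eq_zero fun j _ => by
    rcases eq_or_ne i j with rfl | hij
    · simp [Real.zero_rpow hp]
    · simp [one_apply_ne hij]

theorem rayleighNumerator_mul (x : ι → M) :
    rayleighNumerator π (A * B) p x =
      ∑ i, ∑ k, ∑ j, π i * A i k * B k j * dist (x i) (x j) ^ p := by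
  refine sum_congr rfl fun i _ => ?_
  rw [sum_comm]
  simp only [mul_apply, sum_mul, mul_sum]
  exact sum_congr rfl fun k _ => sum_congr rfl fun j _ => by ring

theorem sum_mul_dist_left_eq_rayleighNumerator (hB : ∀ k, ∑ j, B k j = 1) (x : ι → M) :
    ∑ i, ∑ k, ∑ j, π i * A i k * B k j * dist (x i) (x k) ^ p = rayleighNumerator π A p x := by
  refine sum_congr rfl fun i _ => sum_congr rfl fun k _ => ?_
  simp only [mul_right_comm _ (B k _), ← mul_sum, hB, mul_one]

theorem sum_mul_dist_right_eq_rayleighNumerator (hπA : π ᵥ* A = π) (x : ι → M) :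
    ∑ i, ∑ k, ∑ j, π i * A i k * B k j * dist (x k) (x j) ^ p = rayleighNumerator π B p x := by
  rw [sum_comm]
  refine sum_congr rfl fun k _ => ?_
  rw [sum_comm]
  refine sum_congr rfl fun j _ => ?_
  have hstat : ∑ i, π i * A i k = π k := congrFun hπA k
  rw [← hstat, sum_mul, sum_mul]

theorem rayleighNumerator_mul_rpow_le (hπ : ∀ i, 0 ≤ π i) (hA : ∀ i j, 0 ≤ A i j)
    (hB : ∀ i j, 0 ≤ B i j) (hB1 : ∀ k, ∑ j, B k j = 1) (hπA : π ᵥ* A = π) (hp : 1 ≤ p)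
    (x : ι → M) :
    rayleighNumerator π (A * B) p x ^ (1 / p) ≤
      rayleighNumerator π A p x ^ (1 / p) + rayleighNumerator π B p x ^ (1 / p) := by
  let w : ι × ι × ι → ℝ := fun t => π t.1 * A t.1 t.2.1 * B t.2.1 t.2.2
  have hw : ∀ t ∈ univ, 0 ≤ w t := fun t _ => mul_nonneg (mul_nonneg (hπ _) (hA _ _)) (hB _ _)
  have triangle : rayleighNumerator π (A * B) p x ≤
      ∑ t, w t * (dist (x t.1) (x t.2.1) + dist (x t.2.1) (x t.2.2)) ^ p := by
    rw [rayleighNumerator_mul]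
    simp only [← Fintype.sum_prod_type']
    refine sum_le_sum fun t ht => mul_le_mul_of_nonneg_left ?_ (hw t ht)
    exact Real.rpow_le_rpow dist_nonneg (dist_triangle _ _ _) (by linarith)
  calc rayleighNumerator π (A * B) p x ^ (1 / p)
      ≤ (∑ t, w t * (dist (x t.1) (x t.2.1) + dist (x t.2.1) (x t.2.2)) ^ p) ^ (1 / p) :=
        Real.rpow_le_rpow (rayleighNumerator_nonneg hπ (fun i j =>
          sum_nonneg fun k _ => mul_nonneg (hA i k) (hB k j)) x) triangle (by positivity)
    _ ≤ (∑ t, w t * dist (x t.1) (x t.2.1) ^ p) ^ (1 / p) +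
          (∑ t, w t * dist (x t.2.1) (x t.2.2) ^ p) ^ (1 / p) :=
        weighted_Lp_add_le_of_nonneg _ hp hw (fun _ _ => dist_nonneg) (fun _ _ => dist_nonneg)
    _ = rayleighNumerator π A p x ^ (1 / p) + rayleighNumerator π B p x ^ (1 / p) := by
        rw [← sum_mul_dist_left_eq_rayleighNumerator hB1, ←
          sum_mul_dist_right_eq_rayleighNumerator hπA]
        simp only [w, Fintype.sum_prod_type]

variable [DecidableEq ι]

theorem rayleighNumerator_pow_rpow_le (hπ : ∀ i, 0 ≤ π i) (hA : A ∈ rowStochastic ℝ ι)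
    (hπA : π ᵥ* A = π) (hp : 1 ≤ p) (x : ι → M) (t : ℕ) :
    rayleighNumerator π (A ^ t) p x ^ (1 / p) ≤ t * rayleighNumerator π A p x ^ (1 / p) := by
  induction t with
  | zero =>
    rw [pow_zero, rayleighNumerator_one (by linarith), Real.zero_rpow (by positivity)]
    simp
  | succ t ih =>
    have hAt := mem_rowStochastic_iff_sum.1 (pow_mem hA t)
    calc rayleighNumerator π (A ^ (t + 1)) p x ^ (1 / p)
        ≤ rayleighNumerator π A p x ^ (1 / p) + rayleighNumerator π (A ^ t) p x ^ (1 / p) := by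
          rw [pow_succ']
          exact rayleighNumerator_mul_rpow_le hπ hA.1 hAt.1 hAt.2 hπA hp x
      _ ≤ (t + 1 : ℕ) * rayleighNumerator π A p x ^ (1 / p) := by push_cast; linarith

theorem rayleighNumerator_pow_le (hπ : ∀ i, 0 ≤ π i) (hA : A ∈ rowStochastic ℝ ι)
    (hπA : π ᵥ* A = π) (hp : 1 ≤ p) (x : ι → M) (t : ℕ) :
    rayleighNumerator π (A ^ t) p x ≤ (t : ℝ) ^ p * rayleighNumerator π A p x := by
  have hp0 : p ≠ 0 := by linarith
  have hAnum := rayleighNumerator_nonneg hπ hA.1 x (p := p)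
  have hAtnum := rayleighNumerator_nonneg hπ (pow_mem hA t).1 x (p := p)
  calc rayleighNumerator π (A ^ t) p x
      = (rayleighNumerator π (A ^ t) p x ^ (1 / p)) ^ p := by
        rw [one_div, Real.rpow_inv_rpow hAtnum hp0]
    _ ≤ (t * rayleighNumerator π A p x ^ (1 / p)) ^ p := by
        gcongr
        exact rayleighNumerator_pow_rpow_le hπ hA hπA hp x t
    _ = (t : ℝ) ^ p * rayleighNumerator π A p x := by
        rw [Real.mul_rpow (by positivity) (by positivity), one_div,
          Real.rpow_inv_rpow hAnum hp0]

end rayleighNumerator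

theorem rayleighQuotient_eq_div {n : ℕ} (π : Fin n → ℝ) (A : Matrix (Fin n) (Fin n) ℝ)
    {M : Type*} [MetricSpace M] (p : ℝ) (x : Fin n → M) :
    rayleighQuotient π A p x =
      rayleighNumerator π A p x / rayleighNumerator π (of fun _ j => π j) p x :=
  rfl

theorem rayleighQuotient_rpow_inv_subadditive_general {n : ℕ} (π : Fin n → ℝ)
    (hπpos : ∀ i, 0 < π i)
    (A B : Matrix (Fin n) (Fin n) ℝ)
    (hA0 : ∀ i j, 0 ≤ A i j) (hA1 : ∀ i, ∑ j, A i j = 1)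
    (hArev : ∀ i j, π i * A i j = π j * A j i)
    (hB0 : ∀ i j, 0 ≤ B i j) (hB1 : ∀ i, ∑ j, B i j = 1)
    (M : Type*) [MetricSpace M] (p : ℝ) (hp : 1 ≤ p)
    (x : Fin n → M) :
    rayleighQuotient π (A * B) p x ^ (1 / p) ≤
        rayleighQuotient π A p x ^ (1 / p) + rayleighQuotient π B p x ^ (1 / p) ∧
      ∀ t : ℕ, rayleighQuotient π (A ^ t) p x ≤
        (t : ℝ) ^ p * rayleighQuotient π A p x := by
  have hπ : ∀ i, 0 ≤ π i := fun i => (hπpos i).le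
  have hA : A ∈ rowStochastic ℝ (Fin n) := mem_rowStochastic_iff_sum.2 ⟨hA0, hA1⟩
  have hB : B ∈ rowStochastic ℝ (Fin n) := mem_rowStochastic_iff_sum.2 ⟨hB0, hB1⟩
  have hπA : π ᵥ* A = π := vecMul_eq_self_of_reversible hA1 hArev
  have hD : 0 ≤ rayleighNumerator π (of fun _ j => π j) p x :=
    rayleighNumerator_nonneg hπ (fun _ j => hπ j) x
  simp only [rayleighQuotient_eq_div]
  refine ⟨?_, fun t => ?_⟩
  · rw [Real.div_rpow (rayleighNumerator_nonneg hπ (mul_mem hA hB).1 x) hD,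
      Real.div_rpow (rayleighNumerator_nonneg hπ hA0 x) hD,
      Real.div_rpow (rayleighNumerator_nonneg hπ hB0 x) hD, ← add_div]
    exact div_le_div_of_nonneg_right
      (rayleighNumerator_mul_rpow_le hπ hA0 hB0 hB1 hπA hp x) (by positivity)
  · rw [← mul_div_assoc]
    exact div_le_div_of_nonneg_right (rayleighNumerator_pow_le hπ hA hπA hp x t) hD

/-- Subadditivity of p-th roots of nonlinear Rayleigh quotients under matrix
multiplication, and the consequence R(x; A^t, d^p) ≤ t^p R(x; A, d^p). -/
theorem rayleighQuotient_rpow_inv_subadditive {n : ℕ} (π : Fin n → ℝ)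
    (hπpos : ∀ i, 0 < π i) (hπ1 : ∑ i, π i = 1)
    (A B : Matrix (Fin n) (Fin n) ℝ)
    (hA0 : ∀ i j, 0 ≤ A i j) (hA1 : ∀ i, ∑ j, A i j = 1)
    (hArev : ∀ i j, π i * A i j = π j * A j i)
    (hB0 : ∀ i j, 0 ≤ B i j) (hB1 : ∀ i, ∑ j, B i j = 1)
    (hBrev : ∀ i j, π i * B i j = π j * B j i)
    (M : Type*) [MetricSpace M] (p : ℝ) (hp : 1 ≤ p)
    (x : Fin n → M) (hx : ∃ i j, x i ≠ x j) :
    rayleighQuotient π (A * B) p x ^ (1 / p) ≤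
        rayleighQuotient π A p x ^ (1 / p) + rayleighQuotient π B p x ^ (1 / p) ∧
      ∀ t : ℕ, rayleighQuotient π (A ^ t) p x ≤
        (t : ℝ) ^ p * rayleighQuotient π A p x :=
  rayleighQuotient_rpow_inv_subadditive_general π hπpos A B hA0 hA1 hArev hB0 hB1 M p hp x
end

section
/- Point-wise Rayleigh quotient estimate for Hilbert isomorphs: let X be a normed space and ‖·‖_H a Hilbertian norm on X with ‖y‖_H ≤ ‖y‖_X ≤ d‖y‖_H for all y ∈ X, for some d ≥ 1. Let π be a probability measure on {1,…,n} and A a row-stochastic matrix reversible with respect to π. For x ∈ Xⁿ with not all coordinates equal, let t(x; A) be the minimal t ∈ ℕ such that R(x; ((1/2)Id + (1/2)A)^{2t}, ‖·‖_H²) ≥ 1 − 1/(4d²). If t(x; A) < ∞, then 1/R(x; A, ‖·‖_X²) ≤ C · t(x; A)² for a universal constant C. -/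
open scoped BigOperators

/-- The Hilbertian Rayleigh quotient of the (2t)-th power of the lazy matrix
(1/2)Id + (1/2)A, evaluated at a configuration y of points of a Hilbert space. -/
noncomputable def lazyPowerRayleigh (n : ℕ) (π : Fin n → ℝ)
    (A : Matrix (Fin n) (Fin n) ℝ) {H : Type*} [NormedAddCommGroup H]
    [InnerProductSpace ℝ H] (y : Fin n → H) (t : ℕ) : ℝ :=
  (∑ i, ∑ j, π i *
      ((((1 / 2 : ℝ) • (1 : Matrix (Fin n) (Fin n) ℝ) + (1 / 2 : ℝ) • A) ^ (2 * t)) i j) *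
      ‖y i - y j‖ ^ 2) /
    (∑ i, ∑ j, π i * π j * ‖y i - y j‖ ^ 2)

/-!
Centre `x` at its `π`-mean and put `B = Q ^ t` with `Q = (1/2) Id + (1/2) A`. In the Hilbert
norm, reversibility gives `E(B², Tx) = 2‖Tx‖² - 2‖B Tx‖²` in `L₂(π; H)`, and the denominator of
the Rayleigh quotient (the Dirichlet energy of the matrix all of whose rows are `π`) equals
`2‖Tx‖²`; so the hypothesis on `t` says that `B` shrinks `Tx` by the factor `1/(2d)`, and the norm
comparison turns this into the factor `1/2` in `L₂(π; X)`. Then `‖x‖ ≤ ‖x - Bx‖ + ‖Bx‖` together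
with the convexity bound `‖x - Bx‖² ≤ E(B, x)` gives `‖x‖² ≤ 4 E(B, x)`, while Minkowski's
inequality along paths of the chain gives `E(Q^t, x) ≤ t² E(Q, x) = t² E(A, x) / 2`. Since the
denominator is at most `4‖x‖²`, we get `1 / R(x; A) ≤ 8 t²`.
-/

open Finset Matrix RealInnerProductSpace

section WeightedSums

variable {ι : Type*} [Fintype ι]

lemma sqrt_sum_mul_add_sq_le (w a b : ι → ℝ) (hw : ∀ i, 0 ≤ w i) :
    √(∑ i, w i * (a i + b i) ^ 2) ≤ √(∑ i, w i * a i ^ 2) + √(∑ i, w i * b i ^ 2) := by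
  let v (f : ι → ℝ) : EuclideanSpace ℝ ι := WithLp.toLp 2 fun i => √(w i) * f i
  have hv : ∀ f, √(∑ i, w i * f i ^ 2) = ‖v f‖ := fun f => by
    simp only [v, EuclideanSpace.norm_eq, Real.norm_eq_abs, sq_abs, mul_pow, Real.sq_sqrt (hw _)]
  have hadd : v (a + b) = v a + v b := by
    simp only [v, ← WithLp.toLp_add, Pi.add_apply, mul_add]; rfl
  rw [hv, hv, hv]
  exact hadd ▸ norm_add_le (v a) (v b)

lemma norm_sum_smul_sq_le {E : Type*} [SeminormedAddCommGroup E] [NormedSpace ℝ E]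
    {w : ι → ℝ} (hw₀ : ∀ i, 0 ≤ w i) (hw₁ : ∑ i, w i = 1) (x : ι → E) :
    ‖∑ i, w i • x i‖ ^ 2 ≤ ∑ i, w i * ‖x i‖ ^ 2 :=
  (convexOn_univ_norm.pow (fun _ _ => norm_nonneg _) 2).map_sum_le (fun i _ => hw₀ i) hw₁
    (fun _ _ => Set.mem_univ _)

end WeightedSums

namespace Matrix

variable {ι : Type*} {π : ι → ℝ} {P R : Matrix ι ι ℝ}

def IsReversible (π : ι → ℝ) (P : Matrix ι ι ℝ) : Prop :=
  ∀ i j, π i * P i j = π j * P j i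

lemma isReversible_of_const : IsReversible π (of fun _ => π) := fun i j => mul_comm (π i) (π j)

lemma isReversible_one [DecidableEq ι] : IsReversible π 1 := by
  intro i j
  rcases eq_or_ne i j with rfl | h
  · rfl
  · simp [one_apply_ne h, one_apply_ne h.symm]

lemma IsReversible.lazy [DecidableEq ι] (hP : IsReversible π P) :
    IsReversible π ((1 / 2 : ℝ) • 1 + (1 / 2 : ℝ) • P) := by
  intro i j
  have h1 := isReversible_one (π := π) i j
  simp only [add_apply, smul_apply, smul_eq_mul]
  linear_combination (1 / 2 : ℝ) * h1 + (1 / 2 : ℝ) * hP i j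

lemma of_const_mul_self [Fintype ι] (hπ₁ : ∑ i, π i = 1) :
    of (fun _ : ι => π) * of (fun _ => π) = of fun _ => π := by
  ext i j; simp [mul_apply, ← sum_mul, hπ₁]

variable [Fintype ι]

lemma IsReversible.mul (hP : IsReversible π P) (hR : IsReversible π R) (hPR : Commute P R) :
    IsReversible π (P * R) := by
  intro i j
  calc π i * (P * R) i j = ∑ k, P k i * (π k * R k j) := by
        simp_rw [mul_apply, mul_sum]
        exact sum_congr rfl fun k _ => by rw [← mul_assoc, hP i k]; ring
    _ = π j * (R * P) j i := by
        simp_rw [hR _ j, mul_apply, mul_sum]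
        exact sum_congr rfl fun k _ => by ring
    _ = π j * (P * R) j i := by rw [hPR.eq]

variable [DecidableEq ι]

lemma IsReversible.pow (hP : IsReversible π P) (m : ℕ) : IsReversible π (P ^ m) := by
  induction m with
  | zero => exact isReversible_one
  | succ m ih => rw [pow_succ]; exact ih.mul hP ((Commute.refl P).pow_left m)

lemma lazy_mem_rowStochastic (hP : P ∈ rowStochastic ℝ ι) :
    (1 / 2 : ℝ) • 1 + (1 / 2 : ℝ) • P ∈ rowStochastic ℝ ι :=
  convex_rowStochastic (one_mem _) hP (by norm_num) (by norm_num) (by norm_num)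

lemma of_const_mem_rowStochastic (hπ₀ : ∀ i, 0 ≤ π i) (hπ₁ : ∑ i, π i = 1) :
    of (fun _ => π) ∈ rowStochastic ℝ ι :=
  mem_rowStochastic_iff_sum.2 ⟨fun _ j => hπ₀ j, fun _ => hπ₁⟩

lemma IsReversible.sum_mul_apply (hP : IsReversible π P) (hPs : P ∈ rowStochastic ℝ ι) (j : ι) :
    ∑ i, π i * P i j = π j := by
  simp_rw [hP _ j, ← mul_sum, sum_row_of_mem_rowStochastic hPs, mul_one]

lemma sum_sum_mul_apply_mul_left (hPs : P ∈ rowStochastic ℝ ι) (f : ι → ℝ) :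
    ∑ i, ∑ j, π i * P i j * f i = ∑ i, π i * f i := by
  simp_rw [mul_right_comm _ _ (f _), ← mul_sum, sum_row_of_mem_rowStochastic hPs, mul_one]

lemma IsReversible.sum_sum_mul_apply_mul_right (hP : IsReversible π P)
    (hPs : P ∈ rowStochastic ℝ ι) (f : ι → ℝ) :
    ∑ i, ∑ j, π i * P i j * f j = ∑ j, π j * f j := by
  rw [sum_comm]; simp_rw [← sum_mul, hP.sum_mul_apply hPs]

end Matrix

section DirichletEnergy

variable {ι : Type*} [Fintype ι] {E F : Type*}

def dirichletEnergy [SeminormedAddCommGroup E] (π : ι → ℝ) (P : Matrix ι ι ℝ) (x : ι → E) : ℝ :=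
  ∑ i, ∑ j, π i * P i j * ‖x i - x j‖ ^ 2

def l2NormSq [SeminormedAddCommGroup E] (π : ι → ℝ) (x : ι → E) : ℝ :=
  ∑ i, π i * ‖x i‖ ^ 2

def markovOp [AddCommMonoid E] [Module ℝ E] (P : Matrix ι ι ℝ) (x : ι → E) : ι → E :=
  fun i => ∑ j, P i j • x j

variable {π : ι → ℝ} {P R : Matrix ι ι ℝ}

lemma markovOp_of_const [AddCommMonoid E] [Module ℝ E] {y : ι → E} (hy : ∑ i, π i • y i = 0) :
    markovOp (of fun _ => π) y = 0 := by
  ext; simp [markovOp, hy]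

section Seminormed

variable [SeminormedAddCommGroup E] [SeminormedAddCommGroup F]

lemma dirichletEnergy_sub_const (π : ι → ℝ) (P : Matrix ι ι ℝ) (x : ι → E) (c : E) :
    dirichletEnergy π P (fun i => x i - c) = dirichletEnergy π P x := by
  simp only [dirichletEnergy, sub_sub_sub_cancel_right]

lemma l2NormSq_nonneg (hπ₀ : ∀ i, 0 ≤ π i) (x : ι → E) : 0 ≤ l2NormSq π x :=
  sum_nonneg fun i _ => mul_nonneg (hπ₀ i) (sq_nonneg _)

lemma sqrt_l2NormSq_add_le (hπ₀ : ∀ i, 0 ≤ π i) (u v : ι → E) :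
    √(l2NormSq π (u + v)) ≤ √(l2NormSq π u) + √(l2NormSq π v) :=
  (Real.sqrt_le_sqrt (sum_le_sum fun i _ => mul_le_mul_of_nonneg_left
    (pow_le_pow_left₀ (norm_nonneg _) (norm_add_le (u i) (v i)) 2) (hπ₀ i))).trans
    (sqrt_sum_mul_add_sq_le π _ _ hπ₀)

lemma l2NormSq_le_sq_mul (hπ₀ : ∀ i, 0 ≤ π i) {u : ι → E} {v : ι → F} {c : ℝ}
    (h : ∀ i, ‖u i‖ ≤ c * ‖v i‖) : l2NormSq π u ≤ c ^ 2 * l2NormSq π v := by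
  rw [l2NormSq, l2NormSq, mul_sum]
  refine sum_le_sum fun i _ => ?_
  calc π i * ‖u i‖ ^ 2 ≤ π i * (c * ‖v i‖) ^ 2 := by gcongr; exacts [hπ₀ i, h i]
    _ = c ^ 2 * (π i * ‖v i‖ ^ 2) := by ring

variable [DecidableEq ι]

lemma dirichletEnergy_nonneg (hπ₀ : ∀ i, 0 ≤ π i) (hPs : P ∈ rowStochastic ℝ ι) (x : ι → E) :
    0 ≤ dirichletEnergy π P x :=
  sum_nonneg fun i _ => sum_nonneg fun _ _ =>
    mul_nonneg (mul_nonneg (hπ₀ i) (nonneg_of_mem_rowStochastic hPs)) (sq_nonneg _)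

lemma dirichletEnergy_one (π : ι → ℝ) (x : ι → E) : dirichletEnergy π 1 x = 0 := by
  refine sum_eq_zero fun i _ => sum_eq_zero fun j _ => ?_
  rcases eq_or_ne i j with rfl | h
  · simp
  · simp [one_apply_ne h]

lemma dirichletEnergy_lazy (π : ι → ℝ) (P : Matrix ι ι ℝ) (x : ι → E) :
    dirichletEnergy π ((1 / 2 : ℝ) • 1 + (1 / 2 : ℝ) • P) x = dirichletEnergy π P x / 2 := by
  have hdiag : ∀ i j, (1 : Matrix ι ι ℝ) i j * ‖x i - x j‖ ^ 2 = 0 := fun i j => by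
    rcases eq_or_ne i j with rfl | h
    · simp
    · simp [one_apply_ne h]
  simp only [dirichletEnergy, sum_div]
  refine sum_congr rfl fun i _ => sum_congr rfl fun j _ => ?_
  simp only [Matrix.add_apply, Matrix.smul_apply, smul_eq_mul]
  linear_combination π i / 2 * hdiag i j

lemma dirichletEnergy_le_four_mul_l2NormSq (hπ₀ : ∀ i, 0 ≤ π i) (hPs : P ∈ rowStochastic ℝ ι)
    (hP : IsReversible π P) (x : ι → E) : dirichletEnergy π P x ≤ 4 * l2NormSq π x := by
  calc dirichletEnergy π P x
      ≤ ∑ i, ∑ j, (π i * P i j * (2 * ‖x i‖ ^ 2) + π i * P i j * (2 * ‖x j‖ ^ 2)) := by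
        refine sum_le_sum fun i _ => sum_le_sum fun j _ => ?_
        rw [← mul_add]
        refine mul_le_mul_of_nonneg_left ?_
          (mul_nonneg (hπ₀ i) (nonneg_of_mem_rowStochastic hPs))
        nlinarith [norm_sub_le (x i) (x j), norm_nonneg (x i - x j), sq_nonneg (‖x i‖ - ‖x j‖)]
    _ = 4 * l2NormSq π x := by
        rw [sum_congr rfl fun i _ => sum_add_distrib, sum_add_distrib,
          sum_sum_mul_apply_mul_left hPs fun i => 2 * ‖x i‖ ^ 2,
          hP.sum_sum_mul_apply_mul_right hPs fun j => 2 * ‖x j‖ ^ 2, ← sum_add_distrib, l2NormSq,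
          mul_sum]
        exact sum_congr rfl fun i _ => by ring

lemma sqrt_dirichletEnergy_mul_le (hπ₀ : ∀ i, 0 ≤ π i) (hPs : P ∈ rowStochastic ℝ ι)
    (hP : IsReversible π P) (hRs : R ∈ rowStochastic ℝ ι) (x : ι → E) :
    √(dirichletEnergy π (P * R) x) ≤ √(dirichletEnergy π P x) + √(dirichletEnergy π R x) := by
  let w : ι × ι × ι → ℝ := fun p => π p.1 * P p.1 p.2.1 * R p.2.1 p.2.2
  have hw : ∀ p, 0 ≤ w p := fun p => mul_nonneg
    (mul_nonneg (hπ₀ _) (nonneg_of_mem_rowStochastic hPs)) (nonneg_of_mem_rowStochastic hRs)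
  have hsum : ∀ f : ι → ι → ι → ℝ,
      ∑ p, w p * f p.1 p.2.1 p.2.2 = ∑ i, ∑ j, ∑ k, π i * P i j * R j k * f i j k := fun f => by
    simp only [w, Fintype.sum_prod_type]
  have hPR : dirichletEnergy π (P * R) x = ∑ p, w p * ‖x p.1 - x p.2.2‖ ^ 2 := by
    rw [hsum fun i _ k => ‖x i - x k‖ ^ 2]
    refine sum_congr rfl fun i _ => ?_
    rw [sum_comm]
    refine sum_congr rfl fun k _ => ?_
    rw [mul_apply, mul_sum, sum_mul]
    exact sum_congr rfl fun j _ => by ring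
  have hP' : ∑ p, w p * ‖x p.1 - x p.2.1‖ ^ 2 = dirichletEnergy π P x := by
    rw [hsum fun i j _ => ‖x i - x j‖ ^ 2]
    refine sum_congr rfl fun i _ => sum_congr rfl fun j _ => ?_
    simp_rw [mul_right_comm _ (R j _), ← mul_sum, sum_row_of_mem_rowStochastic hRs, mul_one]
  have hR' : ∑ p, w p * ‖x p.2.1 - x p.2.2‖ ^ 2 = dirichletEnergy π R x := by
    rw [hsum fun _ j k => ‖x j - x k‖ ^ 2, sum_comm]
    refine sum_congr rfl fun j _ => ?_
    rw [sum_comm]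
    refine sum_congr rfl fun k _ => ?_
    simp_rw [mul_assoc _ (R j k), ← sum_mul, hP.sum_mul_apply hPs]
  calc √(dirichletEnergy π (P * R) x)
      ≤ √(∑ p, w p * (‖x p.1 - x p.2.1‖ + ‖x p.2.1 - x p.2.2‖) ^ 2) := by
        rw [hPR]
        refine Real.sqrt_le_sqrt (sum_le_sum fun p _ => mul_le_mul_of_nonneg_left ?_ (hw p))
        exact pow_le_pow_left₀ (norm_nonneg _) (norm_sub_le_norm_sub_add_norm_sub _ _ _) 2
    _ ≤ _ := sqrt_sum_mul_add_sq_le w _ _ hw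
    _ = _ := by rw [hP', hR']

lemma dirichletEnergy_pow_le (hπ₀ : ∀ i, 0 ≤ π i) (hPs : P ∈ rowStochastic ℝ ι)
    (hP : IsReversible π P) (x : ι → E) (m : ℕ) :
    dirichletEnergy π (P ^ m) x ≤ m ^ 2 * dirichletEnergy π P x := by
  have hsqrt : √(dirichletEnergy π (P ^ m) x) ≤ m * √(dirichletEnergy π P x) := by
    induction m with
    | zero => simp [dirichletEnergy_one]
    | succ m ih =>
      calc √(dirichletEnergy π (P ^ (m + 1)) x)
          ≤ √(dirichletEnergy π (P ^ m) x) + √(dirichletEnergy π P x) := by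
            rw [pow_succ]
            exact sqrt_dirichletEnergy_mul_le hπ₀ (pow_mem hPs m) (hP.pow m) hPs x
        _ ≤ m * √(dirichletEnergy π P x) + √(dirichletEnergy π P x) := by gcongr
        _ = (m + 1 : ℕ) * √(dirichletEnergy π P x) := by push_cast; ring
  calc dirichletEnergy π (P ^ m) x = √(dirichletEnergy π (P ^ m) x) ^ 2 :=
        (Real.sq_sqrt (dirichletEnergy_nonneg hπ₀ (pow_mem hPs m) x)).symm
    _ ≤ (m * √(dirichletEnergy π P x)) ^ 2 := by gcongr
    _ = m ^ 2 * dirichletEnergy π P x := by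
        rw [mul_pow, Real.sq_sqrt (dirichletEnergy_nonneg hπ₀ hPs x)]

end Seminormed

section NormedSpace

variable [SeminormedAddCommGroup E] [NormedSpace ℝ E] [DecidableEq ι]

lemma l2NormSq_sub_markovOp_le (hπ₀ : ∀ i, 0 ≤ π i) (hPs : P ∈ rowStochastic ℝ ι) (x : ι → E) :
    l2NormSq π (x - markovOp P x) ≤ dirichletEnergy π P x := by
  rw [l2NormSq, dirichletEnergy]
  refine sum_le_sum fun i _ => ?_
  have hrow := sum_row_of_mem_rowStochastic hPs i
  have hx : x i - markovOp P x i = ∑ j, P i j • (x i - x j) := by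
    simp only [markovOp, smul_sub, sum_sub_distrib, ← sum_smul, hrow, one_smul]
  simp_rw [Pi.sub_apply, hx, mul_assoc, ← mul_sum]
  exact mul_le_mul_of_nonneg_left
    (norm_sum_smul_sq_le (fun j => nonneg_of_mem_rowStochastic hPs) hrow _) (hπ₀ i)

lemma l2NormSq_le_four_mul_dirichletEnergy (hπ₀ : ∀ i, 0 ≤ π i) (hPs : P ∈ rowStochastic ℝ ι)
    {x : ι → E} (h : l2NormSq π (markovOp P x) ≤ l2NormSq π x / 4) :
    l2NormSq π x ≤ 4 * dirichletEnergy π P x := by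
  have htri : √(l2NormSq π x) ≤ √(dirichletEnergy π P x) + √(l2NormSq π x) / 2 :=
    calc √(l2NormSq π x) = √(l2NormSq π ((x - markovOp P x) + markovOp P x)) := by
          rw [sub_add_cancel]
      _ ≤ √(l2NormSq π (x - markovOp P x)) + √(l2NormSq π (markovOp P x)) :=
          sqrt_l2NormSq_add_le hπ₀ _ _
      _ ≤ √(dirichletEnergy π P x) + √(l2NormSq π x / 4) := by
          gcongr; exact l2NormSq_sub_markovOp_le hπ₀ hPs x
      _ = √(dirichletEnergy π P x) + √(l2NormSq π x) / 2 := by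
          rw [Real.sqrt_div' _ (by norm_num : (0 : ℝ) ≤ 4), show (4 : ℝ) = 2 ^ 2 by norm_num,
            Real.sqrt_sq (by norm_num)]
  calc l2NormSq π x = √(l2NormSq π x) ^ 2 := (Real.sq_sqrt (l2NormSq_nonneg hπ₀ x)).symm
    _ ≤ (2 * √(dirichletEnergy π P x)) ^ 2 := by gcongr; linarith
    _ = 4 * dirichletEnergy π P x := by
        rw [mul_pow, Real.sq_sqrt (dirichletEnergy_nonneg hπ₀ hPs x)]; norm_num

end NormedSpace

section InnerProduct

variable [NormedAddCommGroup E] [InnerProductSpace ℝ E]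

lemma Matrix.IsReversible.sum_sum_mul_inner_eq_l2NormSq (hP : IsReversible π P) (y : ι → E) :
    ∑ i, ∑ j, π i * (P * P) i j * ⟪y i, y j⟫ = l2NormSq π (markovOp P y) := by
  simp only [l2NormSq, markovOp, ← real_inner_self_eq_norm_sq, sum_inner, inner_sum,
    real_inner_smul_left, real_inner_smul_right, mul_apply, mul_sum, sum_mul]
  have hterm : ∀ i j k, π i * (P i k * P k j) * ⟪y i, y j⟫ =
      π k * (P k j * (P k i * ⟪y i, y j⟫)) := fun i j k => by
    rw [← mul_assoc, hP i k]; ring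
  simp_rw [hterm]
  rw [sum_congr rfl fun i _ => sum_comm, sum_comm]
  exact sum_congr rfl fun k _ => sum_comm

variable [DecidableEq ι]

lemma dirichletEnergy_eq_sub_inner (hPs : P ∈ rowStochastic ℝ ι) (hP : IsReversible π P)
    (y : ι → E) :
    dirichletEnergy π P y = 2 * l2NormSq π y - 2 * ∑ i, ∑ j, π i * P i j * ⟪y i, y j⟫ := by
  have hexp : ∀ i j, π i * P i j * ‖y i - y j‖ ^ 2 = π i * P i j * ‖y i‖ ^ 2 +
      π i * P i j * ‖y j‖ ^ 2 - 2 * (π i * P i j * ⟪y i, y j⟫) := fun i j => by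
    rw [norm_sub_sq_real]; ring
  simp only [dirichletEnergy, hexp, sum_sub_distrib, sum_add_distrib, ← mul_sum]
  rw [sum_sum_mul_apply_mul_left hPs fun i => ‖y i‖ ^ 2,
    hP.sum_sum_mul_apply_mul_right hPs fun j => ‖y j‖ ^ 2, l2NormSq]
  ring

lemma dirichletEnergy_mul_self (hPs : P ∈ rowStochastic ℝ ι) (hP : IsReversible π P)
    (y : ι → E) :
    dirichletEnergy π (P * P) y = 2 * l2NormSq π y - 2 * l2NormSq π (markovOp P y) := by
  rw [dirichletEnergy_eq_sub_inner (mul_mem hPs hPs) (hP.mul hP (Commute.refl P)),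
    hP.sum_sum_mul_inner_eq_l2NormSq]

lemma l2NormSq_markovOp_le_of_le_rayleigh (hπ₀ : ∀ i, 0 ≤ π i) (hπ₁ : ∑ i, π i = 1)
    (hPs : P ∈ rowStochastic ℝ ι) (hP : IsReversible π P) {y : ι → E}
    (hy : ∑ i, π i • y i = 0) {ε : ℝ}
    (h : 1 - ε ≤ dirichletEnergy π (P * P) y / dirichletEnergy π (of fun _ => π) y) :
    l2NormSq π (markovOp P y) ≤ ε * l2NormSq π y := by
  have hconst : dirichletEnergy π (of fun _ => π) y = 2 * l2NormSq π y := by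
    rw [← of_const_mul_self hπ₁,
      dirichletEnergy_mul_self (of_const_mem_rowStochastic hπ₀ hπ₁) isReversible_of_const,
      markovOp_of_const hy]
    simp [l2NormSq]
  have hPP := dirichletEnergy_mul_self hPs hP y
  -- this settles the degenerate case `l2NormSq π y = 0`, where the quotient in `h` is `0`
  have hle : l2NormSq π (markovOp P y) ≤ l2NormSq π y := by
    linarith [dirichletEnergy_nonneg hπ₀ (mul_mem hPs hPs) y]
  rcases (l2NormSq_nonneg hπ₀ y).eq_or_lt with h0 | hpos
  · rw [← h0] at hle ⊢
    simpa using hle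
  · rw [hconst, hPP, le_div_iff₀ (by positivity)] at h
    linarith

end InnerProduct

lemma l2NormSq_le_four_mul_dirichletEnergy_of_rayleigh [DecidableEq ι] {X H : Type*}
    [NormedAddCommGroup X] [NormedSpace ℝ X] [NormedAddCommGroup H] [InnerProductSpace ℝ H]
    (T : X →ₗ[ℝ] H) {d : ℝ} (hd : 0 < d) (hT₁ : ∀ y, ‖T y‖ ≤ ‖y‖)
    (hT₂ : ∀ y, ‖y‖ ≤ d * ‖T y‖) (hπ₀ : ∀ i, 0 ≤ π i) (hπ₁ : ∑ i, π i = 1)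
    (hPs : P ∈ rowStochastic ℝ ι) (hP : IsReversible π P) {y : ι → X}
    (hy : ∑ i, π i • y i = 0)
    (h : 1 - 1 / (4 * d ^ 2) ≤ dirichletEnergy π (P * P) (fun i => T (y i)) /
      dirichletEnergy π (of fun _ => π) (fun i => T (y i))) :
    l2NormSq π y ≤ 4 * dirichletEnergy π P y := by
  have hTy : ∑ i, π i • T (y i) = 0 := by
    simpa only [map_sum, map_smul, map_zero] using congrArg T hy
  refine l2NormSq_le_four_mul_dirichletEnergy hπ₀ hPs ?_
  calc l2NormSq π (markovOp P y) ≤ d ^ 2 * l2NormSq π (markovOp P fun i => T (y i)) :=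
        l2NormSq_le_sq_mul hπ₀ fun k => by
          simpa only [markovOp, map_sum, map_smul] using hT₂ (markovOp P y k)
    _ ≤ d ^ 2 * (1 / (4 * d ^ 2) * l2NormSq π fun i => T (y i)) := by
        gcongr; exact l2NormSq_markovOp_le_of_le_rayleigh hπ₀ hπ₁ hPs hP hTy h
    _ = l2NormSq π (fun i => T (y i)) / 4 := by field_simp
    _ ≤ l2NormSq π y / 4 := by
        gcongr; simpa using l2NormSq_le_sq_mul hπ₀ (c := 1) fun i => by simpa using hT₁ (y i)

end DirichletEnergy

/-- Point-wise Rayleigh quotient estimate for Hilbert isomorphs: if t = t(x;A)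
is the minimal t with R(x; ((1/2)Id+(1/2)A)^{2t}, ‖·‖_H²) ≥ 1 − 1/(4d²), then
1/R(x; A, ‖·‖_X²) ≤ C t² for a universal constant C. -/
theorem pointwise_rayleigh_estimate :
    ∃ C : ℝ, 0 < C ∧
      ∀ (n : ℕ) (π : Fin n → ℝ), (∀ i, 0 < π i) → (∑ i, π i) = 1 →
      ∀ (A : Matrix (Fin n) (Fin n) ℝ),
        (∀ i j, 0 ≤ A i j) → (∀ i, ∑ j, A i j = 1) →
        (∀ i j, π i * A i j = π j * A j i) →
      ∀ (X : Type) [NormedAddCommGroup X] [NormedSpace ℝ X]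
        (H : Type) [NormedAddCommGroup H] [InnerProductSpace ℝ H]
        (T : X ≃ₗ[ℝ] H) (d : ℝ), 1 ≤ d →
        (∀ y : X, ‖T y‖ ≤ ‖y‖ ∧ ‖y‖ ≤ d * ‖T y‖) →
      ∀ (x : Fin n → X), (∃ i j, x i ≠ x j) →
      ∀ t : ℕ,
        (1 - 1 / (4 * d ^ 2) ≤ lazyPowerRayleigh n π A (fun i => T (x i)) t) →
        (∀ s : ℕ, s < t →
          ¬(1 - 1 / (4 * d ^ 2) ≤ lazyPowerRayleigh n π A (fun i => T (x i)) s)) →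
        1 / ((∑ i, ∑ j, π i * A i j * ‖x i - x j‖ ^ 2) /
              (∑ i, ∑ j, π i * π j * ‖x i - x j‖ ^ 2)) ≤ C * (t : ℝ) ^ 2 := by
  refine ⟨8, by norm_num, ?_⟩
  intro n π hπ hπ₁ A hA₀ hArow hArev X _ _ H _ _ T d hd hT x _ t ht _
  have hπ₀ : ∀ i, 0 ≤ π i := fun i => (hπ i).le
  have hAs : A ∈ rowStochastic ℝ (Fin n) := mem_rowStochastic_iff_sum.2 ⟨hA₀, hArow⟩
  set Q : Matrix (Fin n) (Fin n) ℝ := (1 / 2 : ℝ) • 1 + (1 / 2 : ℝ) • A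
  have hQs : Q ∈ rowStochastic ℝ (Fin n) := lazy_mem_rowStochastic hAs
  have hQ : IsReversible π Q := IsReversible.lazy hArev
  set y : Fin n → X := fun i => x i - ∑ j, π j • x j
  have hy : ∑ i, π i • y i = 0 := by
    simp [y, smul_sub, sum_sub_distrib, ← sum_smul, hπ₁]
  have hR : 1 - 1 / (4 * d ^ 2) ≤ dirichletEnergy π (Q ^ t * Q ^ t) (fun i => T (y i)) /
      dirichletEnergy π (of fun _ => π) (fun i => T (y i)) := by
    simp only [y, map_sub, dirichletEnergy_sub_const, ← pow_add, ← two_mul]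
    exact ht
  have key : dirichletEnergy π (of fun _ => π) x ≤ 8 * t ^ 2 * dirichletEnergy π A x := calc
    _ = dirichletEnergy π (of fun _ => π) y := (dirichletEnergy_sub_const _ _ _ _).symm
    _ ≤ 4 * l2NormSq π y :=
      dirichletEnergy_le_four_mul_l2NormSq hπ₀ (of_const_mem_rowStochastic hπ₀ hπ₁)
        isReversible_of_const y
    _ ≤ 16 * dirichletEnergy π (Q ^ t) y := by
      linarith [l2NormSq_le_four_mul_dirichletEnergy_of_rayleigh T.toLinearMap (by linarith)
        (fun y => (hT y).1) (fun y => (hT y).2) hπ₀ hπ₁ (pow_mem hQs t) (hQ.pow t) hy hR]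
    _ ≤ 16 * (t ^ 2 * dirichletEnergy π Q y) := by
      gcongr
      exact dirichletEnergy_pow_le hπ₀ hQs hQ y t
    _ = 8 * t ^ 2 * dirichletEnergy π A x := by
      rw [dirichletEnergy_lazy, dirichletEnergy_sub_const]; ring
  rw [one_div_div]
  exact div_le_of_le_mul₀ (dirichletEnergy_nonneg hπ₀ hAs x) (by positivity) key
end

section
/- Spectral bound on the power needed for Hilbertian Rayleigh quotient saturation: in the setting of the previous statement, t(x; A) ≤ ⌈ log(2d) / log(2/(1 + λ₂(A))) ⌉ whenever λ₂(A) < 1. In particular, if t ≥ log(2d)/log(2/(1+λ₂(A))) then R(x; ((1/2)Id + (1/2)A)^{2t}, ‖·‖_H²) ≥ 1 − 1/(4d²). -/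
open scoped BigOperators

/-- The second-largest eigenvalue of A as a self-adjoint operator on L₂(π). -/
noncomputable def lambdaTwo (n : ℕ) (π : Fin n → ℝ)
    (A : Matrix (Fin n) (Fin n) ℝ) : ℝ :=
  sSup {r : ℝ | ∃ u : Fin n → ℝ, (∑ i, π i * u i) = 0 ∧
    (∑ i, π i * u i ^ 2) = 1 ∧ r = ∑ i, ∑ j, π i * A i j * u i * u j}

/-!
Centering a configuration does not change its Rayleigh quotient, and for a centered
configuration `z` the numerator and denominator are `2 (‖z‖² - ⟪z, P z⟫)` and `2 ‖z‖²` in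
`L₂(π; H)`, where `P = B ^ (2t)` and `B = (1 + A) / 2`. The lazy matrix `B` is self-adjoint in
`L₂(π)`, and on mean-zero vectors its quadratic form lies between `0` and `r ‖u‖²`,
`r = (1 + λ₂) / 2`; polarization turns this into `‖B u‖ ≤ r ‖u‖`, so
`⟪z, B ^ (2t) z⟫ = ‖B ^ t z‖² ≤ r ^ (2t) ‖z‖²`, first for real `z` and then, coordinatewise in an
orthonormal basis of the span, for `H`-valued `z`. Hence the quotient is at least `1 - r ^ (2t)`,
and `r ^ t ≤ 1 / (2d)` as soon as `t ≥ log (2d) / log (1 / r)`.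
-/

open Matrix Finset
open scoped RealInnerProductSpace

namespace LinearMap

variable {E : Type*} [AddCommGroup E] [Module ℝ E] {g : LinearMap.BilinForm ℝ E}
  {f : Module.End ℝ E}

theorem IsSelfAdjoint.pow (hf : g.IsSelfAdjoint f) (k : ℕ) : g.IsSelfAdjoint ⇑(f ^ k) := by
  induction k with
  | zero => exact isAdjointPair_one
  | succ k ih =>
    intro u v
    rw [pow_succ, Module.End.mul_apply, ih, hf, ← Module.End.mul_apply, ← pow_succ', pow_succ]

variable {S : Submodule ℝ E} {c : ℝ}

theorem BilinForm.apply_map_map_le (hf : g.IsSelfAdjoint f) (hfS : Set.MapsTo f S S)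
    (hc : 0 < c) (hbound : ∀ w ∈ S, |g w (f w)| ≤ c * g w w) {u : E} (hu : u ∈ S) :
    g (f u) (f u) ≤ c ^ 2 * g u u := by
  set v := f u
  have hv : v ∈ S := hfS hu
  -- Polarization at `c • u ± v`:
  -- `4 c g v v ≤ c (g (c u + v) (c u + v) + g (c u - v) (c u - v)) = 2 c (c² g u u + g v v)`.
  have polar : g (c • u + v) (f (c • u + v)) - g (c • u - v) (f (c • u - v)) = 4 * c * g v v := by
    have h1 : g v (f u) = g v v := rfl
    have h2 : g u (f v) = g v v := (hf u v).symm
    simp only [map_add, map_sub, map_smul, LinearMap.add_apply, LinearMap.sub_apply,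
      LinearMap.smul_apply, smul_eq_mul, h1, h2]
    ring
  have parallelogram : g (c • u + v) (c • u + v) + g (c • u - v) (c • u - v) =
      2 * c ^ 2 * g u u + 2 * g v v := by
    simp only [map_add, map_sub, map_smul, LinearMap.add_apply, LinearMap.sub_apply,
      LinearMap.smul_apply, smul_eq_mul]
    ring
  have hp := (le_abs_self _).trans (hbound _ (S.add_mem (S.smul_mem c hu) hv))
  have hm := (neg_abs_le _).trans' (neg_le_neg (hbound _ (S.sub_mem (S.smul_mem c hu) hv)))
  nlinarith

theorem BilinForm.apply_pow_le (hf : g.IsSelfAdjoint f) (hfS : Set.MapsTo f S S)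
    (hc : 0 < c) (hbound : ∀ w ∈ S, |g w (f w)| ≤ c * g w w) {u : E} (hu : u ∈ S) (t : ℕ) :
    g u ((f ^ (2 * t)) u) ≤ c ^ (2 * t) * g u u := by
  rw [two_mul, pow_add, Module.End.mul_apply, ← hf.pow t]
  induction t with
  | zero => simp
  | succ t ih =>
    have hut : (f ^ t) u ∈ S := by rw [Module.End.pow_apply]; exact hfS.iterate t hu
    rw [pow_succ', Module.End.mul_apply]
    calc g (f ((f ^ t) u)) (f ((f ^ t) u)) ≤ c ^ 2 * g ((f ^ t) u) ((f ^ t) u) :=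
          apply_map_map_le hf hfS hc hbound hut
      _ ≤ c ^ 2 * (c ^ (t + t) * g u u) := by gcongr
      _ = c ^ (t + 1 + (t + 1)) * g u u := by ring

end LinearMap

namespace Matrix

variable {ι : Type*} [Fintype ι] [DecidableEq ι]

theorem IsSelfAdjoint.pow {R : Type*} [CommRing R] {J M : Matrix ι ι R} (h : J.IsSelfAdjoint M)
    (k : ℕ) : J.IsSelfAdjoint (M ^ k) := by
  have hsc : SemiconjBy J M Mᵀ := h.symm
  rw [Matrix.IsSelfAdjoint, Matrix.IsAdjointPair, transpose_pow]
  exact (hsc.pow_right k).symm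

variable {π : ι → ℝ} {M : Matrix ι ι ℝ}

theorem isSelfAdjoint_diagonal_iff :
    (diagonal π).IsSelfAdjoint M ↔ ∀ i j, π i * M i j = π j * M j i := by
  simp only [Matrix.IsSelfAdjoint, Matrix.IsAdjointPair, ← Matrix.ext_iff, mul_diagonal,
    diagonal_mul, transpose_apply]
  exact forall_congr' fun i => forall_congr' fun j => by rw [eq_comm, mul_comm (M j i)]

theorem sum_mul_apply_eq_of_isSelfAdjoint (hM : M ∈ rowStochastic ℝ ι)
    (hrev : (diagonal π).IsSelfAdjoint M) (j : ι) : ∑ i, π i * M i j = π j := by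
  simp_rw [isSelfAdjoint_diagonal_iff.1 hrev _ j, ← mul_sum, sum_row_of_mem_rowStochastic hM,
    mul_one]

noncomputable def lazy (M : Matrix ι ι ℝ) : Matrix ι ι ℝ := (1 / 2 : ℝ) • 1 + (1 / 2 : ℝ) • M

theorem lazy_mem_rowStochastic_s15 (hM : M ∈ rowStochastic ℝ ι) : lazy M ∈ rowStochastic ℝ ι :=
  convex_rowStochastic (one_mem _) hM (by norm_num) (by norm_num) (by norm_num)

theorem IsSelfAdjoint.lazy {J : Matrix ι ι ℝ} (h : J.IsSelfAdjoint M) :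
    J.IsSelfAdjoint M.lazy := by
  have h1 : J.IsSelfAdjoint 1 := by simp [Matrix.IsSelfAdjoint, Matrix.IsAdjointPair]
  rw [← mem_selfAdjointMatricesSubmodule] at h h1 ⊢
  exact add_mem (Submodule.smul_mem _ _ h1) (Submodule.smul_mem _ _ h)

end Matrix

section L2

variable {ι : Type*} [Fintype ι] [DecidableEq ι] {π : ι → ℝ} {M : Matrix ι ι ℝ}

noncomputable def l2Inner (π : ι → ℝ) : LinearMap.BilinForm ℝ (ι → ℝ) :=
  toLinearMap₂' ℝ (diagonal π)

theorem l2Inner_apply (u v : ι → ℝ) : l2Inner π u v = ∑ i, π i * u i * v i := by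
  simp only [l2Inner, toLinearMap₂'_apply', dotProduct, mulVec_diagonal]
  exact sum_congr rfl fun i _ => by ring

theorem l2Inner_mulVec (u v : ι → ℝ) :
    l2Inner π u (M *ᵥ v) = ∑ i, ∑ j, π i * M i j * u i * v j := by
  simp only [l2Inner_apply, mulVec, dotProduct, mul_sum]
  exact sum_congr rfl fun i _ => sum_congr rfl fun j _ => by ring

theorem l2Inner_one_left (u : ι → ℝ) : l2Inner π 1 u = ∑ i, π i * u i := by
  simp [l2Inner_apply]

theorem l2Inner_self (u : ι → ℝ) : l2Inner π u u = ∑ i, π i * u i ^ 2 := by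
  simp only [l2Inner_apply, mul_assoc, sq]

theorem l2Inner_self_nonneg (hπ : ∀ i, 0 ≤ π i) (u : ι → ℝ) : 0 ≤ l2Inner π u u := by
  rw [l2Inner_self]; exact sum_nonneg fun i _ => mul_nonneg (hπ i) (sq_nonneg _)

theorem isSelfAdjoint_l2Inner_toLin' (hrev : (diagonal π).IsSelfAdjoint M) :
    (l2Inner π).IsSelfAdjoint (toLin' M) :=
  (isAdjointPair_toLinearMap₂' _ _ _ _).2 hrev

theorem abs_l2Inner_mulVec_self_le (hπ : ∀ i, 0 ≤ π i) (hM : M ∈ rowStochastic ℝ ι)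
    (hrev : (diagonal π).IsSelfAdjoint M) (u : ι → ℝ) :
    |l2Inner π u (M *ᵥ u)| ≤ l2Inner π u u := by
  have hw : ∀ i j, 0 ≤ π i * M i j := fun i j => mul_nonneg (hπ i) (nonneg_of_mem_rowStochastic hM)
  rw [l2Inner_mulVec, l2Inner_self]
  calc |∑ i, ∑ j, π i * M i j * u i * u j|
      ≤ ∑ i, ∑ j, π i * M i j * ((u i ^ 2 + u j ^ 2) / 2) := by
        refine (abs_sum_le_sum_abs _ _).trans (sum_le_sum fun i _ => ?_)
        refine (abs_sum_le_sum_abs _ _).trans (sum_le_sum fun j _ => ?_)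
        rw [mul_assoc, abs_mul, abs_of_nonneg (hw i j)]
        refine mul_le_mul_of_nonneg_left (abs_le.2 ⟨?_, ?_⟩) (hw i j) <;>
          nlinarith [sq_nonneg (u i + u j), sq_nonneg (u i - u j)]
    _ = (∑ i, (∑ j, π i * M i j) * u i ^ 2 + ∑ j, (∑ i, π i * M i j) * u j ^ 2) / 2 := by
        simp only [sum_mul, mul_add, sum_add_distrib, add_div, sum_div]
        rw [sum_comm (f := fun i j => π i * M i j * (u j ^ 2 / 2))]
        congr 1 <;> exact sum_congr rfl fun i _ => sum_congr rfl fun j _ => by ring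
    _ = ∑ i, π i * u i ^ 2 := by
        simp_rw [← mul_sum, sum_row_of_mem_rowStochastic hM, mul_one,
          sum_mul_apply_eq_of_isSelfAdjoint hM hrev]
        ring

end L2

section Spectral

variable {n : ℕ} {π : Fin n → ℝ} {A : Matrix (Fin n) (Fin n) ℝ}

theorem lambdaTwo_eq_sSup :
    lambdaTwo n π A = sSup {r : ℝ | ∃ u, l2Inner π 1 u = 0 ∧ l2Inner π u u = 1 ∧
      r = l2Inner π u (A *ᵥ u)} := by
  simp only [lambdaTwo, l2Inner_one_left, l2Inner_self, l2Inner_mulVec]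

theorem l2Inner_mulVec_self_le_lambdaTwo (hπ : ∀ i, 0 ≤ π i)
    (hA : A ∈ rowStochastic ℝ (Fin n)) (hrev : (diagonal π).IsSelfAdjoint A) {u : Fin n → ℝ}
    (hu : l2Inner π 1 u = 0) : l2Inner π u (A *ᵥ u) ≤ lambdaTwo n π A * l2Inner π u u := by
  have hbdd : BddAbove {r : ℝ | ∃ u, l2Inner π 1 u = 0 ∧ l2Inner π u u = 1 ∧
      r = l2Inner π u (A *ᵥ u)} := by
    refine ⟨1, ?_⟩
    rintro r ⟨v, -, hv, rfl⟩
    exact (le_abs_self _).trans (hv ▸ abs_l2Inner_mulVec_self_le hπ hA hrev v)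
  rcases (l2Inner_self_nonneg hπ u).eq_or_lt with hs | hs
  · have := abs_l2Inner_mulVec_self_le hπ hA hrev u
    rw [← hs] at this ⊢
    linarith [le_abs_self (l2Inner π u (A *ᵥ u))]
  · set s := l2Inner π u u
    set v := (√s)⁻¹ • u
    have hsq : (√s)⁻¹ * (√s)⁻¹ * s = 1 := by
      rw [← mul_inv, Real.mul_self_sqrt hs.le, inv_mul_cancel₀ hs.ne']
    have hv : l2Inner π v (A *ᵥ v) ≤ lambdaTwo n π A := by
      rw [lambdaTwo_eq_sSup]
      refine le_csSup hbdd ⟨v, ?_, ?_, rfl⟩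
      · simp [v, hu]
      · simp only [v, map_smul, LinearMap.smul_apply, smul_eq_mul]
        linarith
    simp only [v, mulVec_smul, map_smul, LinearMap.smul_apply, smul_eq_mul] at hv
    calc l2Inner π u (A *ᵥ u) = s * ((√s)⁻¹ * ((√s)⁻¹ * l2Inner π u (A *ᵥ u))) := by
          linear_combination (-l2Inner π u (A *ᵥ u)) * hsq
      _ ≤ s * lambdaTwo n π A := mul_le_mul_of_nonneg_left hv hs.le
      _ = lambdaTwo n π A * s := mul_comm _ _

theorem l2Inner_lazy_pow_le (hπ : ∀ i, 0 ≤ π i) (hA : A ∈ rowStochastic ℝ (Fin n))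
    (hrev : (diagonal π).IsSelfAdjoint A) (hlam : -1 < lambdaTwo n π A) {u : Fin n → ℝ}
    (hu : l2Inner π 1 u = 0) (t : ℕ) :
    l2Inner π u (A.lazy ^ (2 * t) *ᵥ u) ≤
      ((1 + lambdaTwo n π A) / 2) ^ (2 * t) * l2Inner π u u := by
  have hf := isSelfAdjoint_l2Inner_toLin' hrev.lazy
  have hfS : Set.MapsTo (toLin' A.lazy) (LinearMap.ker (l2Inner π 1))
      (LinearMap.ker (l2Inner π 1)) := by
    intro w hw
    rw [SetLike.mem_coe, LinearMap.mem_ker, ← hf, toLin'_apply,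
      (lazy_mem_rowStochastic_s15 hA).2]
    exact hw
  have hbound : ∀ w ∈ LinearMap.ker (l2Inner π 1),
      |l2Inner π w (toLin' A.lazy w)| ≤ (1 + lambdaTwo n π A) / 2 * l2Inner π w w := by
    intro w hw
    have hsplit : l2Inner π w (toLin' A.lazy w) = (l2Inner π w w + l2Inner π w (A *ᵥ w)) / 2 := by
      rw [toLin'_apply]
      simp only [lazy, add_mulVec, smul_mulVec, one_mulVec, map_add, map_smul, smul_eq_mul]
      ring
    have hlow := neg_le_of_abs_le (abs_l2Inner_mulVec_self_le hπ hA hrev w)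
    have hup := l2Inner_mulVec_self_le_lambdaTwo hπ hA hrev (LinearMap.mem_ker.1 hw)
    rw [hsplit, abs_of_nonneg (by linarith)]
    linarith
  have hc : 0 < (1 + lambdaTwo n π A) / 2 := by linarith
  have := LinearMap.BilinForm.apply_pow_le hf hfS hc hbound (LinearMap.mem_ker.2 hu) t
  rwa [← toLin'_pow, toLin'_apply] at this

end Spectral

section Hilbert

variable {H : Type*} [NormedAddCommGroup H] [InnerProductSpace ℝ H] {ι : Type*}

theorem exists_inner_eq_sum_mul [Finite ι] (z : ι → H) :
    ∃ (m : ℕ) (ℓ : Fin m → H →ₗ[ℝ] ℝ), ∀ i j, ⟪z i, z j⟫ = ∑ k, ℓ k (z i) * ℓ k (z j) := by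
  let V := Submodule.span ℝ (Set.range z)
  have : FiniteDimensional ℝ V := FiniteDimensional.span_of_finite ℝ (Set.finite_range z)
  let b := stdOrthonormalBasis ℝ V
  have hz (i : ι) : z i ∈ V := Submodule.subset_span (Set.mem_range_self i)
  refine ⟨_, fun k => innerₗ H (b k : H), fun i j => ?_⟩
  rw [show ⟪z i, z j⟫ = ⟪(⟨z i, hz i⟩ : V), ⟨z j, hz j⟩⟫ from rfl,
    ← b.sum_inner_mul_inner]
  simp [real_inner_comm]

theorem sum_sum_inner_le_of_forall_real [Fintype ι] (π : ι → ℝ) (w : ι → ι → ℝ) (c : ℝ)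
    (h : ∀ u : ι → ℝ, ∑ i, π i * u i = 0 → ∑ i, ∑ j, w i j * u i * u j ≤ c * ∑ i, π i * u i ^ 2)
    {z : ι → H} (hz : ∑ i, π i • z i = 0) :
    ∑ i, ∑ j, w i j * ⟪z i, z j⟫ ≤ c * ∑ i, π i * ‖z i‖ ^ 2 := by
  obtain ⟨m, ℓ, hℓ⟩ := exists_inner_eq_sum_mul z
  have hmean (k : Fin m) : ∑ i, π i * ℓ k (z i) = 0 := by
    simpa using congrArg (ℓ k) hz
  calc ∑ i, ∑ j, w i j * ⟪z i, z j⟫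
      = ∑ k, ∑ i, ∑ j, w i j * ℓ k (z i) * ℓ k (z j) := by
        simp_rw [hℓ, mul_sum, ← mul_assoc]
        exact (sum_congr rfl fun i _ => sum_comm).trans sum_comm
    _ ≤ ∑ k, c * ∑ i, π i * ℓ k (z i) ^ 2 := sum_le_sum fun k _ => h _ (hmean k)
    _ = c * ∑ i, π i * ‖z i‖ ^ 2 := by
        simp_rw [← mul_sum, ← real_inner_self_eq_norm_sq, hℓ, ← sq, mul_sum]
        rw [sum_comm]

theorem sum_sum_mul_norm_sub_sq [Fintype ι] (w : ι → ι → ℝ) (y : ι → H) :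
    ∑ i, ∑ j, w i j * ‖y i - y j‖ ^ 2 = ∑ i, (∑ j, w i j) * ‖y i‖ ^ 2 +
      ∑ j, (∑ i, w i j) * ‖y j‖ ^ 2 - 2 * ∑ i, ∑ j, w i j * ⟪y i, y j⟫ := by
  simp only [norm_sub_sq_real, mul_sub, mul_add, sum_sub_distrib, sum_add_distrib, sum_mul,
    mul_left_comm (w _ _) (2 : ℝ), ← mul_sum]
  rw [sum_comm (f := fun i j => w i j * ‖y j‖ ^ 2)]
  ring

end Hilbert

section Rayleigh

variable {H : Type*} [NormedAddCommGroup H] [InnerProductSpace ℝ H]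

theorem sum_sum_mul_norm_sub_sq_of_isSelfAdjoint {ι : Type*} [Fintype ι] [DecidableEq ι]
    {π : ι → ℝ} {P : Matrix ι ι ℝ} (hP : P ∈ rowStochastic ℝ ι)
    (hrev : (diagonal π).IsSelfAdjoint P) (y : ι → H) :
    ∑ i, ∑ j, π i * P i j * ‖y i - y j‖ ^ 2 =
      2 * (∑ i, π i * ‖y i‖ ^ 2 - ∑ i, ∑ j, π i * P i j * ⟪y i, y j⟫) := by
  rw [sum_sum_mul_norm_sub_sq]
  simp_rw [← mul_sum, sum_row_of_mem_rowStochastic hP, mul_one,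
    sum_mul_apply_eq_of_isSelfAdjoint hP hrev]
  ring

theorem sum_sum_mul_mul_norm_sub_sq {ι : Type*} [Fintype ι] (π : ι → ℝ) (y : ι → H) :
    ∑ i, ∑ j, π i * π j * ‖y i - y j‖ ^ 2 =
      2 * ((∑ i, π i) * ∑ i, π i * ‖y i‖ ^ 2 - ‖∑ i, π i • y i‖ ^ 2) := by
  rw [sum_sum_mul_norm_sub_sq, ← real_inner_self_eq_norm_sq, sum_inner]
  simp_rw [inner_sum, real_inner_smul_left, real_inner_smul_right, ← mul_sum, ← sum_mul,
    mul_assoc, mul_left_comm (π _) (∑ i, π i), ← mul_sum]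
  ring

variable {n : ℕ} {π : Fin n → ℝ} {A : Matrix (Fin n) (Fin n) ℝ}

theorem lazyPowerRayleigh_sub_const (y : Fin n → H) (m : H) (t : ℕ) :
    lazyPowerRayleigh n π A (fun i => y i - m) t = lazyPowerRayleigh n π A y t := by
  simp only [lazyPowerRayleigh, sub_sub_sub_cancel_right]

theorem one_sub_pow_le_lazyPowerRayleigh (hπ : ∀ i, 0 < π i) (hπ1 : ∑ i, π i = 1)
    (hA : A ∈ rowStochastic ℝ (Fin n)) (hrev : (diagonal π).IsSelfAdjoint A)
    (hlam : -1 < lambdaTwo n π A) {y : Fin n → H} (hy : ∃ i j, y i ≠ y j) (t : ℕ) :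
    1 - ((1 + lambdaTwo n π A) / 2) ^ (2 * t) ≤ lazyPowerRayleigh n π A y t := by
  set z := fun i => y i - ∑ k, π k • y k
  have hz : ∑ i, π i • z i = 0 := by
    simp [z, smul_sub, sum_sub_distrib, ← sum_smul, hπ1]
  have hN : 0 < ∑ i, π i * ‖z i‖ ^ 2 := by
    obtain ⟨i, j, hij⟩ := hy
    obtain ⟨k, hk⟩ : ∃ k, z k ≠ 0 := by
      by_contra! h
      exact hij (by simpa [z, sub_eq_zero] using (h i).trans (h j).symm)
    exact sum_pos' (fun i _ => mul_nonneg (hπ i).le (sq_nonneg _))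
      ⟨k, mem_univ k, mul_pos (hπ k) (pow_pos (norm_pos_iff.2 hk) 2)⟩
  have hquad := sum_sum_inner_le_of_forall_real π (fun i j => π i * (A.lazy ^ (2 * t)) i j) _
    (fun u hu => by
      simpa only [l2Inner_mulVec, l2Inner_self] using
        l2Inner_lazy_pow_le (fun i => (hπ i).le) hA hrev hlam
          ((l2Inner_one_left u).trans hu) t) hz
  have hP := Submonoid.pow_mem _ (lazy_mem_rowStochastic_s15 hA) (2 * t)
  rw [← lazyPowerRayleigh_sub_const y (∑ k, π k • y k)]
  change _ ≤ (∑ i, ∑ j, π i * (A.lazy ^ (2 * t)) i j * ‖z i - z j‖ ^ 2) /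
    ∑ i, ∑ j, π i * π j * ‖z i - z j‖ ^ 2
  rw [sum_sum_mul_norm_sub_sq_of_isSelfAdjoint hP (hrev.lazy.pow _), sum_sum_mul_mul_norm_sub_sq,
    hπ1, hz, norm_zero, one_mul, sq, mul_zero, sub_zero, mul_div_mul_left _ _ two_ne_zero,
    le_div_iff₀ hN]
  nlinarith

end Rayleigh

theorem rpow_le_inv_of_log_div_log_inv_le {r a t : ℝ} (hr0 : 0 < r) (hr1 : r < 1) (ha : 0 < a)
    (h : Real.log a / Real.log r⁻¹ ≤ t) : r ^ t ≤ a⁻¹ := by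
  have hlog : 0 < Real.log r⁻¹ := Real.log_pos (one_lt_inv_iff₀.2 ⟨hr0, hr1⟩)
  rw [div_le_iff₀ hlog, Real.log_inv] at h
  rw [← Real.log_le_log_iff (by positivity) (by positivity), Real.log_rpow hr0, Real.log_inv]
  linarith

theorem saturation_power_spectral_bound_general (n : ℕ) (π : Fin n → ℝ)
    (hπpos : ∀ i, 0 < π i) (hπ1 : ∑ i, π i = 1)
    (A : Matrix (Fin n) (Fin n) ℝ)
    (hA0 : ∀ i j, 0 ≤ A i j) (hA1 : ∀ i, ∑ j, A i j = 1)
    (hArev : ∀ i j, π i * A i j = π j * A j i)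
    (hlamlt : lambdaTwo n π A < 1) (hlamgt : -1 < lambdaTwo n π A)
    (X : Type*) [NormedAddCommGroup X] [NormedSpace ℝ X]
    (H : Type*) [NormedAddCommGroup H] [InnerProductSpace ℝ H]
    (T : X ≃ₗ[ℝ] H) (d : ℝ) (hd : 1 ≤ d)
    (x : Fin n → X) (hx : ∃ i j, x i ≠ x j) :
    (∀ t : ℕ,
      Real.log (2 * d) / Real.log (2 / (1 + lambdaTwo n π A)) ≤ (t : ℝ) →
        1 - 1 / (4 * d ^ 2) ≤ lazyPowerRayleigh n π A (fun i => T (x i)) t) ∧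
    ∀ t : ℕ,
      (1 - 1 / (4 * d ^ 2) ≤ lazyPowerRayleigh n π A (fun i => T (x i)) t) →
      (∀ s : ℕ, s < t →
        ¬(1 - 1 / (4 * d ^ 2) ≤ lazyPowerRayleigh n π A (fun i => T (x i)) s)) →
      t ≤ ⌈Real.log (2 * d) / Real.log (2 / (1 + lambdaTwo n π A))⌉₊ := by
  set r := (1 + lambdaTwo n π A) / 2 with hr
  have hr0 : 0 < r := by linarith
  have hr1 : r < 1 := by linarith
  have hA : A ∈ rowStochastic ℝ (Fin n) := mem_rowStochastic_iff_sum.2 ⟨hA0, hA1⟩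
  have hy : ∃ i j, T (x i) ≠ T (x j) := by
    obtain ⟨i, j, hij⟩ := hx
    exact ⟨i, j, T.injective.ne hij⟩
  have saturated (t : ℕ) (ht : Real.log (2 * d) / Real.log (2 / (1 + lambdaTwo n π A)) ≤ t) :
      1 - 1 / (4 * d ^ 2) ≤ lazyPowerRayleigh n π A (fun i => T (x i)) t := by
    rw [show 2 / (1 + lambdaTwo n π A) = r⁻¹ by rw [hr, inv_div]] at ht
    have hrt : r ^ t ≤ (2 * d)⁻¹ := by
      simpa using rpow_le_inv_of_log_div_log_inv_le hr0 hr1 (by linarith) ht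
    have hr2t : r ^ (2 * t) ≤ 1 / (4 * d ^ 2) := by
      rw [pow_mul', show 1 / (4 * d ^ 2) = (2 * d)⁻¹ ^ 2 by ring]
      exact pow_le_pow_left₀ (by positivity) hrt 2
    exact (sub_le_sub_left hr2t 1).trans <| one_sub_pow_le_lazyPowerRayleigh hπpos hπ1 hA
      (isSelfAdjoint_diagonal_iff.2 hArev) hlamgt hy t
  refine ⟨saturated, fun t _ hmin => ?_⟩
  by_contra! hlt
  exact hmin _ hlt (saturated _ (Nat.le_ceil _))

/-- Spectral bound on the power needed for Hilbertian Rayleigh quotient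
saturation: any t ≥ log(2d)/log(2/(1+λ₂(A))) satisfies the saturation
condition, and consequently the minimal such t is at most
⌈log(2d)/log(2/(1+λ₂(A)))⌉. -/
theorem saturation_power_spectral_bound (n : ℕ) (π : Fin n → ℝ)
    (hπpos : ∀ i, 0 < π i) (hπ1 : ∑ i, π i = 1)
    (A : Matrix (Fin n) (Fin n) ℝ)
    (hA0 : ∀ i j, 0 ≤ A i j) (hA1 : ∀ i, ∑ j, A i j = 1)
    (hArev : ∀ i j, π i * A i j = π j * A j i)
    (hlamlt : lambdaTwo n π A < 1) (hlamgt : -1 < lambdaTwo n π A)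
    (X : Type*) [NormedAddCommGroup X] [NormedSpace ℝ X]
    (H : Type*) [NormedAddCommGroup H] [InnerProductSpace ℝ H]
    (T : X ≃ₗ[ℝ] H) (d : ℝ) (hd : 1 ≤ d)
    (hT : ∀ y : X, ‖T y‖ ≤ ‖y‖ ∧ ‖y‖ ≤ d * ‖T y‖)
    (x : Fin n → X) (hx : ∃ i j, x i ≠ x j) :
    (∀ t : ℕ,
      Real.log (2 * d) / Real.log (2 / (1 + lambdaTwo n π A)) ≤ (t : ℝ) →
        1 - 1 / (4 * d ^ 2) ≤ lazyPowerRayleigh n π A (fun i => T (x i)) t) ∧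
    ∀ t : ℕ,
      (1 - 1 / (4 * d ^ 2) ≤ lazyPowerRayleigh n π A (fun i => T (x i)) t) →
      (∀ s : ℕ, s < t →
        ¬(1 - 1 / (4 * d ^ 2) ≤ lazyPowerRayleigh n π A (fun i => T (x i)) s)) →
      t ≤ ⌈Real.log (2 * d) / Real.log (2 / (1 + lambdaTwo n π A))⌉₊ :=
  saturation_power_spectral_bound_general n π hπpos hπ1 A hA0 hA1 hArev hlamlt hlamgt X H T d hd x
    hx
end
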